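/- arXiv:2202.07366 — 5 statements merged into one kernel-verified Lean document; each statement's English description precedes it below -/
import Mathlib

section
/- In the periodic grid setting, for every cell (i,j) and every flux η ∈ ℝ, the grid function D' obtained from D by the local update at cell (i,j) with flux η satisfies (∇·)_h D'(p,q) = (∇·)_h D(p,q) at every node (p,q) of the grid. In particular, if D satisfies the discrete Gauss law (∇·)_h D(p,q) = Σ_ℓ z^ℓ c^ℓ(p,q) + ρ^f(p,q) at every node, so does D'. -/
/-- Nodes/cells of the periodic grid: indices in `(ℤ/NxZ) × (ℤ/NyZ)`. -/
abbrev Grid (Nx Ny : ℕ) := ZMod Nx × ZMod Ny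

/-- Discrete divergence of an edge-centered vector grid function `(Fx, Fy)` at a node,
`(∇·)ₕF(i,j) = (Fx(i,j) − Fx(i−1,j))/Δx + (Fy(i,j) − Fy(i,j−1))/Δy`. -/
noncomputable def divh {Nx Ny : ℕ} (Δx Δy : ℝ) (Fx Fy : Grid Nx Ny → ℝ)
    (p : Grid Nx Ny) : ℝ :=
  (Fx p - Fx (p.1 - 1, p.2)) / Δx + (Fy p - Fy (p.1, p.2 - 1)) / Δy

/-- The `x`-component of the local update at cell `cell` with flux `η`:
`Dx(i,j) ← Dx(i,j) + η/Δy` and `Dx(i,j+1) ← Dx(i,j+1) − η/Δy`. -/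
noncomputable def updX {Nx Ny : ℕ} (Δx Δy η : ℝ) (Dx : Grid Nx Ny → ℝ)
    (cell : Grid Nx Ny) : Grid Nx Ny → ℝ :=
  fun p => Dx p + (if p = cell then η / Δy else 0)
    + (if p = (cell.1, cell.2 + 1) then -(η / Δy) else 0)

/-- The `y`-component of the local update at cell `cell` with flux `η`:
`Dy(i+1,j) ← Dy(i+1,j) + η/Δx` and `Dy(i,j) ← Dy(i,j) − η/Δx`. -/
noncomputable def updY {Nx Ny : ℕ} (Δx Δy η : ℝ) (Dy : Grid Nx Ny → ℝ)
    (cell : Grid Nx Ny) : Grid Nx Ny → ℝ :=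
  fun p => Dy p + (if p = (cell.1 + 1, cell.2) then η / Δx else 0)
    + (if p = cell then -(η / Δx) else 0)


private lemma iteMulAux (c : Prop) [Decidable c] (a : ℝ) :
    (if c then a else 0) = a * (if c then (1:ℝ) else 0) := by
  split <;> simp

theorem stmt_8 (Nx Ny : ℕ) [NeZero Nx] [NeZero Ny]
    (Δx Δy : ℝ) (hΔx : 0 < Δx) (hΔy : 0 < Δy)
    (Dx Dy : Grid Nx Ny → ℝ) (cell : Grid Nx Ny) (η : ℝ)
    (M : ℕ) (z : Fin M → ℝ) (c : Fin M → Grid Nx Ny → ℝ) (ρf : Grid Nx Ny → ℝ) :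
    (∀ p, divh Δx Δy (updX Δx Δy η Dx cell) (updY Δx Δy η Dy cell) p
        = divh Δx Δy Dx Dy p) ∧
    ((∀ p, divh Δx Δy Dx Dy p = (∑ ℓ, z ℓ * c ℓ p) + ρf p) →
      ∀ p, divh Δx Δy (updX Δx Δy η Dx cell) (updY Δx Δy η Dy cell) p
        = (∑ ℓ, z ℓ * c ℓ p) + ρf p) := by
  have key : ∀ p, divh Δx Δy (updX Δx Δy η Dx cell) (updY Δx Δy η Dy cell) p
      = divh Δx Δy Dx Dy p := by
    intro p
    simp only [divh, updX, updY]
    rw [iteMulAux (p = cell) (η / Δy), iteMulAux (p = (cell.1, cell.2 + 1)) (-(η / Δy)),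
        iteMulAux ((p.1 - 1, p.2) = cell) (η / Δy),
        iteMulAux ((p.1 - 1, p.2) = (cell.1, cell.2 + 1)) (-(η / Δy)),
        iteMulAux (p = (cell.1 + 1, cell.2)) (η / Δx),
        iteMulAux (p = cell) (-(η / Δx)),
        iteMulAux ((p.1, p.2 - 1) = (cell.1 + 1, cell.2)) (η / Δx),
        iteMulAux ((p.1, p.2 - 1) = cell) (-(η / Δx))]
    have h1 : ((p.1 - 1, p.2) = cell) = (p = (cell.1 + 1, cell.2)) := by
      simp [Prod.ext_iff, sub_eq_iff_eq_add]
    have h2 : ((p.1 - 1, p.2) = (cell.1, cell.2 + 1)) = (p = (cell.1 + 1, cell.2 + 1)) := by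
      simp [Prod.ext_iff, sub_eq_iff_eq_add]
    have h3 : ((p.1, p.2 - 1) = cell) = (p = (cell.1, cell.2 + 1)) := by
      simp [Prod.ext_iff, sub_eq_iff_eq_add]
    have h4 : ((p.1, p.2 - 1) = (cell.1 + 1, cell.2)) = (p = (cell.1 + 1, cell.2 + 1)) := by
      simp [Prod.ext_iff, sub_eq_iff_eq_add]
    simp only [h1, h2, h3, h4]
    ring
  refine ⟨key, fun h p => ?_⟩
  rw [key p, h p]
end

section
/- In the periodic grid setting, fix a cell (i,j), let δF(η) := (η²/2)·a(i,j) + η·b(i,j) with a(i,j) > 0, and let η* = −b(i,j)/a(i,j). Then the following are equivalent: (1) δF(η*) = 0; (2) η* = 0; (3) the discrete curl vanishes at cell (i,j), i.e. (∇×)_h(D/ε)(i,j) = 0. Consequently, the local relaxation leaves the energy unchanged at every cell if and only if the discrete curl of D/ε vanishes at every cell. -/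
/-- Discrete electric field energy
`F_pot^h(D) = (ΔxΔy/2) Σ_{i,j} [Dx(i,j)²/εx(i,j) + Dy(i,j)²/εy(i,j)]`. -/
noncomputable def Fpot {Nx Ny : ℕ} [NeZero Nx] [NeZero Ny] (Δx Δy : ℝ)
    (εx εy Dx Dy : Grid Nx Ny → ℝ) : ℝ :=
  Δx * Δy / 2 * ∑ p : Grid Nx Ny, (Dx p ^ 2 / εx p + Dy p ^ 2 / εy p)

/-- The quadratic coefficient `a(i,j)` of the energy change of the local update. -/
noncomputable def acoef {Nx Ny : ℕ} (Δx Δy : ℝ) (εx εy : Grid Nx Ny → ℝ)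
    (cell : Grid Nx Ny) : ℝ :=
  Δx / Δy * (1 / εx cell + 1 / εx (cell.1, cell.2 + 1))
    + Δy / Δx * (1 / εy cell + 1 / εy (cell.1 + 1, cell.2))

/-- The linear coefficient `b(i,j)` of the energy change of the local update. -/
noncomputable def bcoef {Nx Ny : ℕ} (Δx Δy : ℝ) (εx εy Dx Dy : Grid Nx Ny → ℝ)
    (cell : Grid Nx Ny) : ℝ :=
  Δx * (Dx cell / εx cell - Dx (cell.1, cell.2 + 1) / εx (cell.1, cell.2 + 1))
    + Δy * (Dy (cell.1 + 1, cell.2) / εy (cell.1 + 1, cell.2) - Dy cell / εy cell)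

/-- Discrete curl of `D/ε` at cell `(i,j)`:
`(∇×)ₕ(D/ε)(i,j) = (Dy(i+1,j)/εy(i+1,j) − Dy(i,j)/εy(i,j))/Δx
   + (Dx(i,j)/εx(i,j) − Dx(i,j+1)/εx(i,j+1))/Δy`. -/
noncomputable def curlh {Nx Ny : ℕ} (Δx Δy : ℝ) (εx εy Dx Dy : Grid Nx Ny → ℝ)
    (cell : Grid Nx Ny) : ℝ :=
  (Dy (cell.1 + 1, cell.2) / εy (cell.1 + 1, cell.2) - Dy cell / εy cell) / Δx
    + (Dx cell / εx cell - Dx (cell.1, cell.2 + 1) / εx (cell.1, cell.2 + 1)) / Δy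


lemma aux_df_iff {a b : ℝ} (ha : 0 < a) :
    ((-b / a) ^ 2 / 2 * a + (-b / a) * b = 0) ↔ (-b / a = 0) := by
  have ha' : a ≠ 0 := ne_of_gt ha
  have h : (-b / a) ^ 2 / 2 * a + (-b / a) * b = -(b ^ 2) / (2 * a) := by
    field_simp; ring
  rw [h]
  constructor
  · intro h0
    have hb : b = 0 := by
      have := (div_eq_zero_iff.mp h0)
      rcases this with h1 | h1
      · have : b ^ 2 = 0 := by linarith [neg_eq_zero.mp h1]
        exact pow_eq_zero_iff (n := 2) (by norm_num) |>.mp this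
      · exact absurd h1 (by positivity)
    simp [hb]
  · intro h0
    have hb : b = 0 := by
      have := neg_eq_zero.mp (by
        field_simp at h0; simpa using h0)
      simpa using this
    simp [hb]

theorem stmt_12 (Nx Ny : ℕ) [NeZero Nx] [NeZero Ny]
    (Δx Δy : ℝ) (hΔx : 0 < Δx) (hΔy : 0 < Δy)
    (εx εy : Grid Nx Ny → ℝ) (hεx : ∀ p, 0 < εx p) (hεy : ∀ p, 0 < εy p)
    (Dx Dy : Grid Nx Ny → ℝ) (cell : Grid Nx Ny)
    (ha : ∀ q, 0 < acoef Δx Δy εx εy q) :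
    -- (1) ↔ (2): the minimal energy change vanishes iff the optimal flux vanishes
    (((-(bcoef Δx Δy εx εy Dx Dy cell) / acoef Δx Δy εx εy cell) ^ 2 / 2
          * acoef Δx Δy εx εy cell
        + (-(bcoef Δx Δy εx εy Dx Dy cell) / acoef Δx Δy εx εy cell)
          * bcoef Δx Δy εx εy Dx Dy cell = 0)
      ↔ -(bcoef Δx Δy εx εy Dx Dy cell) / acoef Δx Δy εx εy cell = 0) ∧
    -- (2) ↔ (3): the optimal flux vanishes iff the discrete curl vanishes at the cell
    ((-(bcoef Δx Δy εx εy Dx Dy cell) / acoef Δx Δy εx εy cell = 0)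
      ↔ curlh Δx Δy εx εy Dx Dy cell = 0) ∧
    -- consequently: energy unchanged at every cell iff the discrete curl vanishes everywhere
    ((∀ q : Grid Nx Ny,
        (-(bcoef Δx Δy εx εy Dx Dy q) / acoef Δx Δy εx εy q) ^ 2 / 2
            * acoef Δx Δy εx εy q
          + (-(bcoef Δx Δy εx εy Dx Dy q) / acoef Δx Δy εx εy q)
            * bcoef Δx Δy εx εy Dx Dy q = 0)
      ↔ ∀ q : Grid Nx Ny, curlh Δx Δy εx εy Dx Dy q = 0) := by

  have hb_curl : ∀ q : Grid Nx Ny,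
      bcoef Δx Δy εx εy Dx Dy q = Δx * Δy * curlh Δx Δy εx εy Dx Dy q := by
    intro q
    unfold bcoef curlh
    field_simp
    ring
  have h23 : ∀ q : Grid Nx Ny,
      (-(bcoef Δx Δy εx εy Dx Dy q) / acoef Δx Δy εx εy q = 0)
        ↔ curlh Δx Δy εx εy Dx Dy q = 0 := by
    intro q
    have haq := ha q
    rw [div_eq_zero_iff]
    constructor
    · intro h
      rcases h with h | h
      · have hb0 : bcoef Δx Δy εx εy Dx Dy q = 0 := by linarith [neg_eq_zero.mp h]
        rw [hb_curl q] at hb0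
        have : Δx * Δy ≠ 0 := by positivity
        exact (mul_eq_zero.mp hb0).resolve_left this
      · exact absurd h (ne_of_gt haq)
    · intro h
      left
      rw [hb_curl q, h]
      ring
  refine ⟨aux_df_iff (ha cell), h23 cell, ?_⟩
  constructor
  · intro h q
    exact (h23 q).mp ((aux_df_iff (ha q)).mp (h q))
  · intro h q
    exact (aux_df_iff (ha q)).mpr ((h23 q).mpr (h q))
end

section
/- In the periodic grid setting, let σ : ℕ → grid-cells be an arbitrary sequence of cells, and define iterates D⁽⁰⁾ := D and D⁽ᵏ⁺¹⁾ := the local update of D⁽ᵏ⁾ at cell σ(k) with the optimal flux η*(D⁽ᵏ⁾, σ(k)) = −b⁽ᵏ⁾(σ(k))/a(σ(k)), where a and b⁽ᵏ⁾ are computed from ε and D⁽ᵏ⁾. Then: (1) F_pot^h(D⁽ᵏ⁺¹⁾) ≤ F_pot^h(D⁽ᵏ⁾) for all k; (2) F_pot^h(D⁽ᵏ⁾) ≥ 0 for all k; (3) the sequence k ↦ F_pot^h(D⁽ᵏ⁾) converges to some limit L ≥ 0; and (4) (∇·)_h D⁽ᵏ⁾ = (∇·)_h D⁽⁰⁾ at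 every node for all k. -/
/-- One step of the local curl-free relaxation: update the displacement pair at
cell `cell` using the optimal flux `η* = −b/a`. -/
noncomputable def relaxStep {Nx Ny : ℕ} (Δx Δy : ℝ) (εx εy : Grid Nx Ny → ℝ)
    (D : (Grid Nx Ny → ℝ) × (Grid Nx Ny → ℝ)) (cell : Grid Nx Ny) :
    (Grid Nx Ny → ℝ) × (Grid Nx Ny → ℝ) :=
  (updX Δx Δy (-(bcoef Δx Δy εx εy D.1 D.2 cell) / acoef Δx Δy εx εy cell) D.1 cell,
   updY Δx Δy (-(bcoef Δx Δy εx εy D.1 D.2 cell) / acoef Δx Δy εx εy cell) D.2 cell)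


lemma sum_sq_ne {Nx Ny : ℕ} [NeZero Nx] [NeZero Ny] (g ε : Grid Nx Ny → ℝ)
    (c c' : Grid Nx Ny) (hcc : c' ≠ c) (t : ℝ) :
    ∑ p : Grid Nx Ny,
      (g p + (if p = c then t else 0) + (if p = c' then -t else 0)) ^ 2 / ε p
    = (∑ p : Grid Nx Ny, g p ^ 2 / ε p)
      + ((2 * g c * t + t ^ 2) / ε c + (-(2 * g c' * t) + t ^ 2) / ε c') := by
  have key : ∀ p : Grid Nx Ny,
      (g p + (if p = c then t else 0) + (if p = c' then -t else 0)) ^ 2 / ε p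
      = g p ^ 2 / ε p + ((if p = c then (2 * g c * t + t ^ 2) / ε c else 0)
        + (if p = c' then (-(2 * g c' * t) + t ^ 2) / ε c' else 0)) := by
    intro p
    by_cases h1 : p = c <;> by_cases h2 : p = c'
    · exact absurd (h2.symm.trans h1) hcc
    · rw [if_pos h1, if_neg h2, if_pos h1, if_neg h2]; subst h1; ring
    · rw [if_neg h1, if_pos h2, if_neg h1, if_pos h2]; subst h2; ring
    · simp [h1, h2]
  rw [Finset.sum_congr rfl fun p _ => key p, Finset.sum_add_distrib,
    Finset.sum_add_distrib, Finset.sum_ite_eq' Finset.univ c,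
    Finset.sum_ite_eq' Finset.univ c']
  simp

lemma sum_sq_eq {Nx Ny : ℕ} [NeZero Nx] [NeZero Ny] (g ε : Grid Nx Ny → ℝ)
    (c c' : Grid Nx Ny) (hcc : c' = c) (t : ℝ) :
    ∑ p : Grid Nx Ny,
      (g p + (if p = c then t else 0) + (if p = c' then -t else 0)) ^ 2 / ε p
    = ∑ p : Grid Nx Ny, g p ^ 2 / ε p := by
  subst hcc
  refine Finset.sum_congr rfl fun p _ => ?_
  by_cases h : p = c' <;> simp [h]

lemma opt_quad_nonpos (a aeff b : ℝ) (ha : 0 < a) (h0 : 0 ≤ aeff) (hle : aeff ≤ a) :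
    -b / a * b + (-b / a) ^ 2 / 2 * aeff ≤ 0 := by
  have h : -b / a * b + (-b / a) ^ 2 / 2 * aeff = b ^ 2 * (aeff - 2 * a) / (2 * a ^ 2) := by
    field_simp
    ring
  rw [h]
  apply div_nonpos_of_nonpos_of_nonneg
  · nlinarith [sq_nonneg b]
  · positivity

lemma divh_upd {Nx Ny : ℕ} (Δx Δy η : ℝ) (Dx Dy : Grid Nx Ny → ℝ)
    (c p : Grid Nx Ny) :
    divh Δx Δy (updX Δx Δy η Dx c) (updY Δx Δy η Dy c) p = divh Δx Δy Dx Dy p := by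
  simp only [divh, updX, updY, Prod.ext_iff, sub_eq_iff_eq_add]
  split_ifs <;> ring

lemma Fpot_nonneg {Nx Ny : ℕ} [NeZero Nx] [NeZero Ny]
    (Δx Δy : ℝ) (hΔx : 0 < Δx) (hΔy : 0 < Δy)
    (εx εy : Grid Nx Ny → ℝ) (hεx : ∀ p, 0 < εx p) (hεy : ∀ p, 0 < εy p)
    (Dx Dy : Grid Nx Ny → ℝ) : 0 ≤ Fpot Δx Δy εx εy Dx Dy := by
  unfold Fpot
  exact mul_nonneg (div_nonneg (mul_nonneg hΔx.le hΔy.le) (by norm_num))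
    (Finset.sum_nonneg fun p _ => add_nonneg
      (div_nonneg (sq_nonneg _) (hεx p).le) (div_nonneg (sq_nonneg _) (hεy p).le))

lemma Fpot_relax_le {Nx Ny : ℕ} [NeZero Nx] [NeZero Ny]
    (Δx Δy : ℝ) (hΔx : 0 < Δx) (hΔy : 0 < Δy)
    (εx εy : Grid Nx Ny → ℝ) (hεx : ∀ p, 0 < εx p) (hεy : ∀ p, 0 < εy p)
    (D : (Grid Nx Ny → ℝ) × (Grid Nx Ny → ℝ)) (cell : Grid Nx Ny) :
    Fpot Δx Δy εx εy (relaxStep Δx Δy εx εy D cell).1 (relaxStep Δx Δy εx εy D cell).2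
      ≤ Fpot Δx Δy εx εy D.1 D.2 := by
  have hx1 := hεx cell
  have hx2 := hεx ((cell.1, cell.2 + 1) : Grid Nx Ny)
  have hy1 := hεy cell
  have hy2 := hεy ((cell.1 + 1, cell.2) : Grid Nx Ny)
  have haX : (0:ℝ) < Δx / Δy * (1 / εx cell + 1 / εx (cell.1, cell.2 + 1)) :=
    mul_pos (div_pos hΔx hΔy) (add_pos (one_div_pos.mpr hx1) (one_div_pos.mpr hx2))
  have haY : (0:ℝ) < Δy / Δx * (1 / εy cell + 1 / εy (cell.1 + 1, cell.2)) :=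
    mul_pos (div_pos hΔy hΔx) (add_pos (one_div_pos.mpr hy1) (one_div_pos.mpr hy2))
  have hAsum : acoef Δx Δy εx εy cell
      = Δx / Δy * (1 / εx cell + 1 / εx (cell.1, cell.2 + 1))
        + Δy / Δx * (1 / εy cell + 1 / εy (cell.1 + 1, cell.2)) := rfl
  have ha : 0 < acoef Δx Δy εx εy cell := by rw [hAsum]; linarith
  simp only [relaxStep, Fpot, updX, updY, Finset.sum_add_distrib]
  set A := acoef Δx Δy εx εy cell with hA
  set B := bcoef Δx Δy εx εy D.1 D.2 cell with hB
  by_cases h1 : ((cell.1, cell.2 + 1) : Grid Nx Ny) = cell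
    <;> by_cases h2 : cell = ((cell.1 + 1, cell.2) : Grid Nx Ny)
  · -- both degenerate
    rw [sum_sq_eq D.1 εx cell (cell.1, cell.2 + 1) h1 (-B / A / Δy),
      sum_sq_eq D.2 εy (cell.1 + 1, cell.2) cell h2 (-B / A / Δx)]
  · -- X degenerate, Y not
    rw [sum_sq_eq D.1 εx cell (cell.1, cell.2 + 1) h1 (-B / A / Δy),
      sum_sq_ne D.2 εy (cell.1 + 1, cell.2) cell h2 (-B / A / Δx)]
    have key : ∀ η : ℝ, Δx * Δy / 2 *
        ((2 * D.2 (cell.1 + 1, cell.2) * (η / Δx) + (η / Δx) ^ 2) / εy (cell.1 + 1, cell.2)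
          + (-(2 * D.2 cell * (η / Δx)) + (η / Δx) ^ 2) / εy cell)
        = η * B + η ^ 2 / 2 * (Δy / Δx * (1 / εy cell + 1 / εy (cell.1 + 1, cell.2))) := by
      intro η
      rw [hB]
      simp only [bcoef, h1]
      field_simp
      ring
    have hq := opt_quad_nonpos A
      (Δy / Δx * (1 / εy cell + 1 / εy (cell.1 + 1, cell.2))) B ha haY.le
      (by rw [hAsum]; linarith)
    have e := (key (-B / A)).le.trans hq
    linarith [e]
  · -- Y degenerate, X not
    rw [sum_sq_ne D.1 εx cell (cell.1, cell.2 + 1) h1 (-B / A / Δy),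
      sum_sq_eq D.2 εy (cell.1 + 1, cell.2) cell h2 (-B / A / Δx)]
    have key : ∀ η : ℝ, Δx * Δy / 2 *
        ((2 * D.1 cell * (η / Δy) + (η / Δy) ^ 2) / εx cell
          + (-(2 * D.1 (cell.1, cell.2 + 1) * (η / Δy)) + (η / Δy) ^ 2) / εx (cell.1, cell.2 + 1))
        = η * B + η ^ 2 / 2 * (Δx / Δy * (1 / εx cell + 1 / εx (cell.1, cell.2 + 1))) := by
      intro η
      rw [hB]
      simp only [bcoef, ← h2]
      field_simp
      ring
    have hq := opt_quad_nonpos A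
      (Δx / Δy * (1 / εx cell + 1 / εx (cell.1, cell.2 + 1))) B ha haX.le
      (by rw [hAsum]; linarith)
    have e := (key (-B / A)).le.trans hq
    linarith [e]
  · -- both nondegenerate
    rw [sum_sq_ne D.1 εx cell (cell.1, cell.2 + 1) h1 (-B / A / Δy),
      sum_sq_ne D.2 εy (cell.1 + 1, cell.2) cell h2 (-B / A / Δx)]
    have key : ∀ η : ℝ, Δx * Δy / 2 *
        (((2 * D.1 cell * (η / Δy) + (η / Δy) ^ 2) / εx cell
          + (-(2 * D.1 (cell.1, cell.2 + 1) * (η / Δy)) + (η / Δy) ^ 2) / εx (cell.1, cell.2 + 1))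
        + ((2 * D.2 (cell.1 + 1, cell.2) * (η / Δx) + (η / Δx) ^ 2) / εy (cell.1 + 1, cell.2)
          + (-(2 * D.2 cell * (η / Δx)) + (η / Δx) ^ 2) / εy cell))
        = η * B + η ^ 2 / 2 * A := by
      intro η
      rw [hA, hB]
      simp only [bcoef, acoef]
      field_simp
      ring
    have hq := opt_quad_nonpos A A B ha ha.le le_rfl
    have e := (key (-B / A)).le.trans hq
    linarith [e]

theorem stmt_13 (Nx Ny : ℕ) [NeZero Nx] [NeZero Ny]
    (Δx Δy : ℝ) (hΔx : 0 < Δx) (hΔy : 0 < Δy)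
    (εx εy : Grid Nx Ny → ℝ) (hεx : ∀ p, 0 < εx p) (hεy : ∀ p, 0 < εy p)
    (σ : ℕ → Grid Nx Ny)
    (Dseq : ℕ → (Grid Nx Ny → ℝ) × (Grid Nx Ny → ℝ))
    (hstep : ∀ k, Dseq (k + 1) = relaxStep Δx Δy εx εy (Dseq k) (σ k)) :
    -- (1) the discrete energy is non-increasing along the iteration
    (∀ k, Fpot Δx Δy εx εy (Dseq (k + 1)).1 (Dseq (k + 1)).2
        ≤ Fpot Δx Δy εx εy (Dseq k).1 (Dseq k).2) ∧
    -- (2) the discrete energy is nonnegative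
    (∀ k, 0 ≤ Fpot Δx Δy εx εy (Dseq k).1 (Dseq k).2) ∧
    -- (3) the energy sequence converges to some limit L ≥ 0
    (∃ L : ℝ, 0 ≤ L ∧
      Filter.Tendsto (fun k => Fpot Δx Δy εx εy (Dseq k).1 (Dseq k).2)
        Filter.atTop (nhds L)) ∧
    -- (4) the discrete divergence is preserved at every node
    (∀ k, ∀ p : Grid Nx Ny,
      divh Δx Δy (Dseq k).1 (Dseq k).2 p = divh Δx Δy (Dseq 0).1 (Dseq 0).2 p) := by
  have hdiv : ∀ k p, divh Δx Δy (Dseq (k+1)).1 (Dseq (k+1)).2 p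
      = divh Δx Δy (Dseq k).1 (Dseq k).2 p := by
    intro k p
    rw [hstep k]
    exact divh_upd Δx Δy _ (Dseq k).1 (Dseq k).2 (σ k) p
  have h1 : ∀ k, Fpot Δx Δy εx εy (Dseq (k + 1)).1 (Dseq (k + 1)).2
      ≤ Fpot Δx Δy εx εy (Dseq k).1 (Dseq k).2 := by
    intro k
    rw [hstep k]
    exact Fpot_relax_le Δx Δy hΔx hΔy εx εy hεx hεy (Dseq k) (σ k)
  have h2 : ∀ k, 0 ≤ Fpot Δx Δy εx εy (Dseq k).1 (Dseq k).2 :=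
    fun k => Fpot_nonneg Δx Δy hΔx hΔy εx εy hεx hεy _ _
  refine ⟨h1, h2, ?_, ?_⟩
  · refine ⟨⨅ k, Fpot Δx Δy εx εy (Dseq k).1 (Dseq k).2, le_ciInf h2, ?_⟩
    exact tendsto_atTop_ciInf (antitone_nat_of_succ_le h1)
      ⟨0, fun x ⟨k, hk⟩ => hk ▸ h2 k⟩
  · intro k
    induction k with
    | zero => intro p; rfl
    | succ k ih => intro p; rw [hdiv k p]; exact ih p
end

section
/- Let M ≥ 1, Δt > 0, and let z¹,…,z^M ∈ ℝ. On the periodic grid, let c^{ℓ,n}, c^{ℓ,n+1}, ρ^f : grid → ℝ be node-centered grid functions and let J^{ℓ,n}, D^n, D^*, Θ^n be edge-centered vector grid functions (with components indexed as D_x, D_y). Assume: (i) c^{ℓ,n+1}(i,j) = c^{ℓ,n}(i,j) − Δt·(∇·)_h J^{ℓ,n}(i,j) for all ℓ and all nodes (i,j); (ii) D^* = D^n + Δt·( −Σ_{ℓ=1}^M z^ℓ J^{ℓ,n} + Θ^n ) componentwise on every edge; (iii) (∇·)_h Θ^n(i,j) = 0 at every node; (iv) the discrete Gauss law (∇·)_h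 D^n(i,j) = Σ_{ℓ=1}^M z^ℓ c^{ℓ,n}(i,j) + ρ^f(i,j) holds at every node. Then the discrete Gauss law holds at the new level: (∇·)_h D^*(i,j) = Σ_{ℓ=1}^M z^ℓ c^{ℓ,n+1}(i,j) + ρ^f(i,j) at every node (i,j). -/
theorem stmt_14 (Nx Ny : ℕ) [NeZero Nx] [NeZero Ny]
    (Δx Δy : ℝ) (hΔx : 0 < Δx) (hΔy : 0 < Δy)
    (M : ℕ) (hM : 1 ≤ M) (Δt : ℝ) (hΔt : 0 < Δt) (z : Fin M → ℝ)
    (cn cn1 : Fin M → Grid Nx Ny → ℝ) (ρf : Grid Nx Ny → ℝ)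
    (Jx Jy : Fin M → Grid Nx Ny → ℝ)
    (Dnx Dny Dsx Dsy Θx Θy : Grid Nx Ny → ℝ)
    -- (i) conservative update of the concentrations
    (hc : ∀ ℓ p, cn1 ℓ p = cn ℓ p - Δt * divh Δx Δy (Jx ℓ) (Jy ℓ) p)
    -- (ii) explicit Maxwell–Ampère update, componentwise on every edge
    (hDx : ∀ p, Dsx p = Dnx p + Δt * (-(∑ ℓ, z ℓ * Jx ℓ p) + Θx p))
    (hDy : ∀ p, Dsy p = Dny p + Δt * (-(∑ ℓ, z ℓ * Jy ℓ p) + Θy p))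
    -- (iii) Θ is discretely divergence-free
    (hΘ : ∀ p, divh Δx Δy Θx Θy p = 0)
    -- (iv) discrete Gauss law at time level n
    (hGauss : ∀ p, divh Δx Δy Dnx Dny p = (∑ ℓ, z ℓ * cn ℓ p) + ρf p) :
    ∀ p, divh Δx Δy Dsx Dsy p = (∑ ℓ, z ℓ * cn1 ℓ p) + ρf p := by
  intro p
  have hg := hGauss p
  have hθ := hΘ p
  have hsum : (∑ ℓ, z ℓ * cn1 ℓ p) = (∑ ℓ, z ℓ * cn ℓ p)
      - Δt * (((∑ ℓ, z ℓ * Jx ℓ p) - (∑ ℓ, z ℓ * Jx ℓ (p.1 - 1, p.2))) / Δx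
        + ((∑ ℓ, z ℓ * Jy ℓ p) - (∑ ℓ, z ℓ * Jy ℓ (p.1, p.2 - 1))) / Δy) := by
    simp only [hc, divh, mul_sub, mul_add, Finset.sum_sub_distrib, Finset.sum_add_distrib,
      ← mul_div_assoc, sub_div, Finset.sum_div, Finset.mul_sum, mul_left_comm]
  rw [hsum]
  simp only [divh, hDx, hDy] at *
  linear_combination hg + Δt * hθ
end

section
/- Let M ≥ 1, Δt > 0, z¹,…,z^M ∈ ℝ. On the periodic grid, let c^{ℓ,n−1}, c^{ℓ,n}, ρ^f be node-centered grid functions and D^{n−1}, D^n, J^{ℓ,n−1} edge-centered vector grid functions. Assume: (i) c^{ℓ,n}(i,j) = c^{ℓ,n−1}(i,j) − Δt·(∇·)_h J^{ℓ,n−1}(i,j) for all ℓ and nodes (i,j); (ii) the discrete Gauss law holds at both time levels, i.e. (∇·)_h D^m(i,j) = Σ_{ℓ} z^ℓ c^{ℓ,m}(i,j) + ρ^f(i,j) for m = n−1 and m = n, at every node. Define Θ₂^n := (D^n − D^{n−1})/Δt + Σ_{ℓ=1}^M z^ℓ J^{ℓ,n−1} (componentwise on edges). Then Θ₂^n is discretely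 divergence-free: (∇·)_h Θ₂^n(i,j) = 0 at every node (i,j). -/
theorem stmt_16 (Nx Ny : ℕ) [NeZero Nx] [NeZero Ny]
    (Δx Δy : ℝ) (hΔx : 0 < Δx) (hΔy : 0 < Δy)
    (M : ℕ) (hM : 1 ≤ M) (Δt : ℝ) (hΔt : 0 < Δt) (z : Fin M → ℝ)
    (cnm1 cn : Fin M → Grid Nx Ny → ℝ) (ρf : Grid Nx Ny → ℝ)
    (Dm1x Dm1y Dnx Dny : Grid Nx Ny → ℝ) (Jx Jy : Fin M → Grid Nx Ny → ℝ)
    -- (i) conservative update of the concentrations from level n−1 to level n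
    (hc : ∀ ℓ p, cn ℓ p = cnm1 ℓ p - Δt * divh Δx Δy (Jx ℓ) (Jy ℓ) p)
    -- (ii) the discrete Gauss law holds at both time levels
    (hGauss1 : ∀ p, divh Δx Δy Dm1x Dm1y p = (∑ ℓ, z ℓ * cnm1 ℓ p) + ρf p)
    (hGauss2 : ∀ p, divh Δx Δy Dnx Dny p = (∑ ℓ, z ℓ * cn ℓ p) + ρf p) :
    -- Θ₂ⁿ := (Dⁿ − Dⁿ⁻¹)/Δt + Σ_ℓ z^ℓ J^{ℓ,n−1} is discretely divergence-free
    ∀ p, divh Δx Δy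
        (fun q => (Dnx q - Dm1x q) / Δt + ∑ ℓ, z ℓ * Jx ℓ q)
        (fun q => (Dny q - Dm1y q) / Δt + ∑ ℓ, z ℓ * Jy ℓ q) p = 0 := by
  intro p
  have h1 := hGauss1 p
  have h2 := hGauss2 p
  simp only [hc, mul_sub, Finset.sum_sub_distrib] at h2
  have hsum : ∑ ℓ, z ℓ * (Δt * divh Δx Δy (Jx ℓ) (Jy ℓ) p)
      = Δt * divh Δx Δy (fun q => ∑ ℓ, z ℓ * Jx ℓ q)
          (fun q => ∑ ℓ, z ℓ * Jy ℓ q) p := by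
    simp only [divh, mul_add]
    rw [← Finset.sum_sub_distrib, ← Finset.sum_sub_distrib, Finset.sum_div,
      Finset.sum_div, Finset.mul_sum, Finset.mul_sum, ← Finset.sum_add_distrib]
    exact Finset.sum_congr rfl fun i _ => by ring
  rw [hsum] at h2
  simp only [divh] at h1 h2 ⊢
  have hx := hΔx.ne'
  have hy := hΔy.ne'
  have ht := hΔt.ne'
  field_simp at h1 h2 ⊢
  ring_nf at h1 h2 ⊢
  nlinarith [h1, h2]
end
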